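/- arXiv:2004.10541 — 4 statements merged into one kernel-verified Lean document; each statement's English description precedes it below -/
import Mathlib

section
/- Let M > 0 and let (μ_n) be a sequence of finite Borel measures on ℂ with μ_n(ℂ) ≤ M for all n, converging weakly to a finite Borel measure μ (i.e. ∫ g dμ_n → ∫ g dμ for every bounded continuous g : ℂ → ℝ). Let L ⊆ ℂ be a compact set and δ > 0 such that the distance from L to supp μ_n is at least δ for every n, and L is disjoint from supp μ. Then the Cauchy transforms f_{μ_n} converge to f_μ uniformly on L. -/
open MeasureTheory Complex Filter

/-- The support of a Borel measure: the set of points all of whose neighborhoods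
have positive measure. -/
def msupport (μ : Measure ℂ) : Set ℂ :=
  {x | ∀ U ∈ nhds x, μ U ≠ 0}

/-- The Cauchy transform of a measure `μ` on `ℂ`. -/
noncomputable def cauchyTransform (μ : Measure ℂ) (z : ℂ) : ℂ :=
  (1 / (2 * Real.pi * Complex.I)) * ∫ t, (z - t)⁻¹ ∂μ

/-- Truncated Cauchy kernel. -/
noncomputable def kk (ε : ℝ) (w : ℂ) : ℂ :=
  (starRingEnd ℂ) w * ((((max (‖w‖) ε) ^ 2)⁻¹ : ℝ) : ℂ)

lemma kk_eq {ε : ℝ} {w : ℂ} (h : ε ≤ ‖w‖) : kk ε w = w⁻¹ := by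
  rw [kk, max_eq_left h, Complex.inv_def, Complex.sq_norm]

lemma kk_cont {ε : ℝ} (hε : 0 < ε) : Continuous (kk ε) := by
  have h1 : Continuous fun w : ℂ => (max (‖w‖) ε) ^ 2 :=
    (continuous_norm.max continuous_const).pow 2
  have h2 : ∀ w : ℂ, (max (‖w‖) ε) ^ 2 ≠ 0 := fun w =>
    (pow_pos (lt_of_lt_of_le hε (le_max_right _ _)) 2).ne'
  exact Complex.continuous_conj.mul (Complex.continuous_ofReal.comp (h1.inv₀ h2))

lemma kk_norm {ε : ℝ} (hε : 0 < ε) (w : ℂ) : ‖kk ε w‖ ≤ ε⁻¹ := by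
  set m : ℝ := max (‖w‖) ε with hm
  have hεm : ε ≤ m := le_max_right _ _
  have hm0 : 0 < m := lt_of_lt_of_le hε hεm
  have hA : ‖w‖ ≤ m := le_max_left _ _
  have h3 : ‖kk ε w‖ = ‖w‖ * (m ^ 2)⁻¹ := by
    rw [kk, norm_mul, Complex.norm_conj, Complex.norm_real,
      Real.norm_eq_abs, _root_.abs_of_nonneg (by positivity)]
  rw [h3]
  calc ‖w‖ * (m ^ 2)⁻¹ ≤ m * (m ^ 2)⁻¹ := by
        gcongr
      _ = m⁻¹ := by field_simp
      _ ≤ ε⁻¹ := by gcongr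

lemma kk_lip {ε : ℝ} (hε : 0 < ε) (a b : ℂ) :
    ‖kk ε a - kk ε b‖ ≤ 3 / ε ^ 2 * ‖a - b‖ := by
  set x : ℝ := max (‖a‖) ε with hx
  set y : ℝ := max (‖b‖) ε with hy
  set d : ℝ := ‖a - b‖ with hd
  have hεx : ε ≤ x := le_max_right _ _
  have hεy : ε ≤ y := le_max_right _ _
  have hx0 : 0 < x := lt_of_lt_of_le hε hεx
  have hy0 : 0 < y := lt_of_lt_of_le hε hεy
  have hB : ‖b‖ ≤ y := le_max_left _ _
  have hd0 : 0 ≤ d := norm_nonneg _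
  have hxy : |x - y| ≤ d :=
    (abs_max_sub_max_le_abs _ _ _).trans (abs_norm_sub_norm_le a b)
  have key : kk ε a - kk ε b
      = ((starRingEnd ℂ) a - (starRingEnd ℂ) b) * (((x ^ 2)⁻¹ : ℝ) : ℂ)
        + (starRingEnd ℂ) b * ((((x ^ 2)⁻¹ - (y ^ 2)⁻¹ : ℝ)) : ℂ) := by
    rw [kk, kk]
    push_cast
    ring
  have hnorm : ‖kk ε a - kk ε b‖ ≤ d * (x ^ 2)⁻¹ + ‖b‖ * |(x ^ 2)⁻¹ - (y ^ 2)⁻¹| := by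
    rw [key]
    refine (norm_add_le _ _).trans ?_
    rw [norm_mul, norm_mul, Complex.norm_real, Complex.norm_real, ← map_sub,
      Complex.norm_conj, Complex.norm_conj,
      Real.norm_eq_abs, Real.norm_eq_abs,
      _root_.abs_of_nonneg (by positivity : (0:ℝ) ≤ (x ^ 2)⁻¹), ← hd]
  have habs : |(x ^ 2)⁻¹ - (y ^ 2)⁻¹| = (x + y) * |x - y| / (x ^ 2 * y ^ 2) := by
    rw [inv_sub_inv (by positivity) (by positivity), abs_div,
      _root_.abs_of_nonneg (by positivity : (0:ℝ) ≤ x ^ 2 * y ^ 2)]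
    congr 1
    have h6 : y ^ 2 - x ^ 2 = (x + y) * (y - x) := by ring
    rw [h6, abs_mul, _root_.abs_of_nonneg (by positivity : (0:ℝ) ≤ x + y), abs_sub_comm]
  have hnd : ‖a - b‖ = d := hd.symm
  refine hnorm.trans ?_
  have h1 : d * (x ^ 2)⁻¹ ≤ d / ε ^ 2 := by
    rw [← div_eq_mul_inv]
    gcongr
  have h2 : ‖b‖ * |(x ^ 2)⁻¹ - (y ^ 2)⁻¹| ≤ y * ((x + y) * d / (x ^ 2 * y ^ 2)) := by
    rw [habs]
    gcongr
  have h3 : y * ((x + y) * d / (x ^ 2 * y ^ 2)) = d / (x * y) + d / x ^ 2 := by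
    field_simp
  have h4 : d / (x * y) ≤ d / ε ^ 2 := by
    have hxy2 : ε ^ 2 ≤ x * y := by nlinarith
    gcongr
  have h5 : d / x ^ 2 ≤ d / ε ^ 2 := by gcongr
  calc d * (x ^ 2)⁻¹ + ‖b‖ * |(x ^ 2)⁻¹ - (y ^ 2)⁻¹|
      ≤ d / ε ^ 2 + (d / (x * y) + d / x ^ 2) := by rw [← h3]; exact add_le_add h1 h2
    _ ≤ d / ε ^ 2 + (d / ε ^ 2 + d / ε ^ 2) := by gcongr
    _ = 3 / ε ^ 2 * d := by ring

lemma msupport_closed' (ν : Measure ℂ) : IsClosed {x : ℂ | ∀ U ∈ nhds x, ν U ≠ 0} := by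
  rw [← isOpen_compl_iff]
  refine isOpen_iff_mem_nhds.2 fun x hx => ?_
  simp only [Set.mem_compl_iff, Set.mem_setOf_eq, not_forall, not_not, exists_prop] at hx
  obtain ⟨U, hU, hU0⟩ := hx
  obtain ⟨V, hVU, hV, hxV⟩ := mem_nhds_iff.1 hU
  refine Filter.mem_of_superset (hV.mem_nhds hxV) fun y hy => ?_
  simp only [Set.mem_compl_iff, Set.mem_setOf_eq, not_forall, not_not, exists_prop]
  exact ⟨V, hV.mem_nhds hy, measure_mono_null hVU hU0⟩

lemma msupport_null' (ν : Measure ℂ) : ν {x : ℂ | ∀ U ∈ nhds x, ν U ≠ 0}ᶜ = 0 := by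
  apply measure_null_of_locally_null
  intro x hx
  simp only [Set.mem_compl_iff, Set.mem_setOf_eq, not_forall, not_not, exists_prop] at hx
  obtain ⟨U, hU, h0⟩ := hx
  exact ⟨U, nhdsWithin_le_nhds hU, h0⟩

noncomputable def Fnu (ε : ℝ) (ν : Measure ℂ) (z : ℂ) : ℂ := ∫ t, kk ε (z - t) ∂ν


/-- If `(μ n)` have uniformly bounded total mass, converge weakly to `μ`, and `L`
is a compact set at distance at least `δ > 0` from every `supp μ_n` and disjoint
from `supp μ`, then the Cauchy transforms `f_{μ n}` converge to `f_μ` uniformly on `L`. -/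
theorem stmt_1 (M : ℝ) (hM : 0 < M)
    (μseq : ℕ → Measure ℂ) (μ : Measure ℂ)
    [∀ n, IsFiniteMeasure (μseq n)] [IsFiniteMeasure μ]
    (hmass : ∀ n, μseq n Set.univ ≤ ENNReal.ofReal M)
    (hweak : ∀ g : ℂ → ℝ, Continuous g → (∃ C, ∀ x, |g x| ≤ C) →
      Tendsto (fun n => ∫ x, g x ∂(μseq n)) atTop (nhds (∫ x, g x ∂μ)))
    (L : Set ℂ) (hL : IsCompact L) (δ : ℝ) (hδ : 0 < δ)
    (hdist : ∀ n, ∀ x ∈ L, ∀ y ∈ msupport (μseq n), δ ≤ dist x y)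
    (hdisj : L ∩ msupport μ = ∅) :
    TendstoUniformlyOn (fun n z => cauchyTransform (μseq n) z)
      (cauchyTransform μ) atTop L := by
  classical
  have hdisj' : Disjoint L (msupport μ) := Set.disjoint_iff_inter_eq_empty.2 hdisj
  obtain ⟨r, hr, hrd⟩ := EMetric.exists_pos_forall_lt_edist hL (msupport_closed' μ) hdisj'
  set ε : ℝ := min δ (r : ℝ) with hε_def
  have hε : 0 < ε := lt_min hδ (by exact_mod_cast hr)
  have hdistμ : ∀ x ∈ L, ∀ y ∈ msupport μ, ε ≤ dist x y := by
    intro x hx y hy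
    have h1 := hrd x hx y hy
    rw [edist_dist, ENNReal.ofReal, ENNReal.coe_lt_coe] at h1
    have h2 : (r : ℝ) < dist x y := by
      have := NNReal.coe_lt_coe.2 h1
      rwa [Real.coe_toNNReal _ dist_nonneg] at this
    exact (min_le_right δ _).trans h2.le
  have hdistn : ∀ n, ∀ x ∈ L, ∀ y ∈ msupport (μseq n), ε ≤ dist x y := fun n x hx y hy =>
    (min_le_left δ _).trans (hdist n x hx y hy)
  have hae : ∀ ν : Measure ℂ, ∀ᵐ t ∂ν, t ∈ msupport ν := by
    intro ν
    rw [MeasureTheory.ae_iff]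
    exact msupport_null' ν
  have hcont : Continuous (kk ε) := kk_cont hε
  have hInt : ∀ (ν : Measure ℂ) [IsFiniteMeasure ν] (z : ℂ),
      Integrable (fun t => kk ε (z - t)) ν := by
    intro ν _ z
    refine ⟨(hcont.comp (continuous_const.sub continuous_id)).aestronglyMeasurable, ?_⟩
    exact HasFiniteIntegral.of_bounded (C := ε⁻¹)
      (Filter.Eventually.of_forall fun t => kk_norm hε _)
  have hCT : ∀ (ν : Measure ℂ) [IsFiniteMeasure ν],
      (∀ x ∈ L, ∀ y ∈ msupport ν, ε ≤ dist x y) →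
      ∀ z ∈ L, cauchyTransform ν z = (1 / (2 * Real.pi * Complex.I)) * Fnu ε ν z := by
    intro ν _ hd z hz
    unfold cauchyTransform Fnu
    congr 1
    refine integral_congr_ae ?_
    filter_upwards [hae ν] with t ht
    exact (kk_eq (by rw [← Complex.dist_eq]; exact hd z hz t ht)).symm
  have hmassn : ∀ n, ((μseq n) Set.univ).toReal ≤ M := fun n =>
    ENNReal.toReal_le_of_le_ofReal hM.le (hmass n)
  have hmassμ : (μ Set.univ).toReal ≤ M := by
    have h1 := hweak (fun _ => (1 : ℝ)) continuous_const ⟨1, fun _ => by norm_num⟩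
    simp only [integral_const, smul_eq_mul, mul_one] at h1
    exact le_of_tendsto' h1 hmassn
  have hLip : ∀ (ν : Measure ℂ) [IsFiniteMeasure ν], (ν Set.univ).toReal ≤ M →
      ∀ z z' : ℂ, ‖Fnu ε ν z - Fnu ε ν z'‖ ≤ 3 / ε ^ 2 * M * ‖z - z'‖ := by
    intro ν _ hν z z'
    unfold Fnu
    rw [← integral_sub (hInt ν z) (hInt ν z')]
    have hb : ∀ t, ‖kk ε (z - t) - kk ε (z' - t)‖ ≤ 3 / ε ^ 2 * ‖z - z'‖ := by
      intro t
      have h := kk_lip hε (z - t) (z' - t)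
      rwa [sub_sub_sub_cancel_right] at h
    refine (norm_integral_le_of_norm_le_const (Filter.Eventually.of_forall hb)).trans ?_
    calc 3 / ε ^ 2 * ‖z - z'‖ * (ν Set.univ).toReal
        ≤ 3 / ε ^ 2 * ‖z - z'‖ * M := by gcongr
      _ = 3 / ε ^ 2 * M * ‖z - z'‖ := by ring
  have hpt : ∀ z : ℂ, Tendsto (fun n => Fnu ε (μseq n) z) atTop (nhds (Fnu ε μ z)) := by
    intro z
    have hcz : Continuous fun t : ℂ => kk ε (z - t) :=
      hcont.comp (continuous_const.sub continuous_id)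
    have hre := hweak (fun t => (kk ε (z - t)).re) (Complex.continuous_re.comp hcz)
      ⟨ε⁻¹, fun t => (Complex.abs_re_le_norm _).trans
        (kk_norm hε (z - t))⟩
    have him := hweak (fun t => (kk ε (z - t)).im) (Complex.continuous_im.comp hcz)
      ⟨ε⁻¹, fun t => (Complex.abs_im_le_norm _).trans
        (kk_norm hε (z - t))⟩
    have hrepr : ∀ (ν : Measure ℂ) [IsFiniteMeasure ν],
        Fnu ε ν z = ((∫ t, (kk ε (z - t)).re ∂ν : ℝ) : ℂ)
          + ((∫ t, (kk ε (z - t)).im ∂ν : ℝ) : ℂ) * Complex.I := by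
      intro ν _
      have h := integral_re_add_im (hInt ν z)
      simp only [RCLike.re_to_complex, RCLike.im_to_complex, RCLike.I_to_complex] at h
      exact h.symm
    have heq : (fun n => Fnu ε (μseq n) z) = fun n =>
        ((∫ t, (kk ε (z - t)).re ∂(μseq n) : ℝ) : ℂ)
          + ((∫ t, (kk ε (z - t)).im ∂(μseq n) : ℝ) : ℂ) * Complex.I :=
      funext fun n => hrepr (μseq n)
    rw [heq, hrepr μ]
    have t1 : Tendsto (fun n => ((∫ t, (kk ε (z - t)).re ∂(μseq n) : ℝ) : ℂ)) atTop
        (nhds ((∫ t, (kk ε (z - t)).re ∂μ : ℝ) : ℂ)) :=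
      (Complex.continuous_ofReal.tendsto _).comp hre
    have t2 : Tendsto (fun n => ((∫ t, (kk ε (z - t)).im ∂(μseq n) : ℝ) : ℂ)) atTop
        (nhds ((∫ t, (kk ε (z - t)).im ∂μ : ℝ) : ℂ)) :=
      (Complex.continuous_ofReal.tendsto _).comp him
    exact t1.add (t2.mul_const _)
  -- final argument
  rw [Metric.tendstoUniformlyOn_iff]
  intro eps heps
  set K : ℝ := 3 / ε ^ 2 * M with hK
  have hK0 : 0 < K := by positivity
  set ρ : ℝ := eps / 3 / K with hρ
  have hρ0 : 0 < ρ := by positivity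
  obtain ⟨tt, httL, htcov⟩ := hL.elim_nhds_subcover (fun x => Metric.ball x ρ)
    (fun x _ => Metric.ball_mem_nhds x hρ0)
  have hev : ∀ᶠ n in atTop, ∀ c ∈ tt, dist (Fnu ε μ c) (Fnu ε (μseq n) c) < eps / 3 := by
    rw [Filter.eventually_all_finset]
    intro c _
    filter_upwards [(hpt c).eventually
      (Metric.ball_mem_nhds (Fnu ε μ c) (by positivity : (0:ℝ) < eps / 3))] with n hn
    rw [dist_comm]
    exact Metric.mem_ball.1 hn
  have hcnorm : ‖(1 / (2 * (Real.pi : ℂ) * Complex.I) : ℂ)‖ ≤ 1 := by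
    have hπ := Real.pi_gt_three
    rw [norm_div, norm_one, norm_mul, norm_mul, Complex.norm_two,
      Complex.norm_I, Complex.norm_real, Real.norm_eq_abs, _root_.abs_of_pos Real.pi_pos, mul_one,
      div_le_one (by positivity)]
    linarith
  filter_upwards [hev] with n hn z hz
  obtain ⟨c, hct, hzc⟩ : ∃ c ∈ tt, z ∈ Metric.ball c ρ := by
    have h := htcov hz
    simpa using h
  rw [hCT μ hdistμ z hz, hCT (μseq n) (hdistn n) z hz]
  have step0 : dist ((1 / (2 * (Real.pi : ℂ) * Complex.I)) * Fnu ε μ z)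
      ((1 / (2 * (Real.pi : ℂ) * Complex.I)) * Fnu ε (μseq n) z)
      ≤ dist (Fnu ε μ z) (Fnu ε (μseq n) z) := by
    rw [dist_eq_norm, dist_eq_norm, ← mul_sub, norm_mul]
    calc ‖(1 / (2 * (Real.pi : ℂ) * Complex.I) : ℂ)‖ * ‖Fnu ε μ z - Fnu ε (μseq n) z‖
        ≤ 1 * ‖Fnu ε μ z - Fnu ε (μseq n) z‖ := by gcongr
      _ = _ := one_mul _
  refine lt_of_le_of_lt step0 ?_
  have hdzc : dist z c < ρ := Metric.mem_ball.1 hzc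
  have e1 : dist (Fnu ε μ z) (Fnu ε μ c) ≤ eps / 3 := by
    rw [dist_eq_norm]
    refine (hLip μ hmassμ z c).trans ?_
    have : ‖z - c‖ ≤ ρ := by rw [← dist_eq_norm]; exact hdzc.le
    calc K * ‖z - c‖ ≤ K * ρ := by gcongr
      _ = eps / 3 := by rw [hρ]; field_simp
  have e2 : dist (Fnu ε μ c) (Fnu ε (μseq n) c) < eps / 3 := hn c hct
  have e3 : dist (Fnu ε (μseq n) c) (Fnu ε (μseq n) z) ≤ eps / 3 := by
    rw [dist_eq_norm]
    refine (hLip (μseq n) (hmassn n) c z).trans ?_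
    have : ‖c - z‖ ≤ ρ := by rw [← dist_eq_norm, dist_comm]; exact hdzc.le
    calc K * ‖c - z‖ ≤ K * ρ := by gcongr
      _ = eps / 3 := by rw [hρ]; field_simp
  have htri := dist_triangle4 (Fnu ε μ z) (Fnu ε μ c) (Fnu ε (μseq n) c) (Fnu ε (μseq n) z)
  linarith
end

section
/- (Monogenic Residue Formula, circle case.) Let μ be a finite Borel measure on ℂ with compact support, let c ∈ ℂ and r > 0, and assume the circle {z : |z − c| = r} is disjoint from supp μ. Then the contour integral of the Cauchy transform f_μ over the positively oriented circle of center c and radius r equals μ(B(c,r)), the μ-measure of the open disc of center c and radius r. -/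
open MeasureTheory Complex

lemma msupport_isClosed (μ : Measure ℂ) : IsClosed (msupport μ) := by
  rw [← isOpen_compl_iff, isOpen_iff_mem_nhds]
  intro x hx
  simp only [msupport, Set.mem_compl_iff, Set.mem_setOf_eq, not_forall, not_not] at hx
  obtain ⟨U, hU, hU0⟩ := hx
  obtain ⟨V, hVU, hVopen, hxV⟩ := mem_nhds_iff.mp hU
  refine Filter.mem_of_superset (hVopen.mem_nhds hxV) ?_
  intro y hy
  simp only [msupport, Set.mem_compl_iff, Set.mem_setOf_eq, not_forall, not_not]
  exact ⟨V, hVopen.mem_nhds hy, measure_mono_null hVU hU0⟩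

lemma msupport_compl_null (μ : Measure ℂ) : μ (msupport μ)ᶜ = 0 := by
  apply measure_null_of_locally_null
  intro x hx
  simp only [msupport, Set.mem_compl_iff, Set.mem_setOf_eq, not_forall, not_not] at hx
  obtain ⟨U, hU, hU0⟩ := hx
  exact ⟨U, nhdsWithin_le_nhds hU, hU0⟩

/-- Monogenic residue formula (circle case): if the circle of center `c` and radius
`r` avoids the (compact) support of the finite measure `μ`, then the contour integral
of the Cauchy transform over this positively oriented circle equals `μ(B(c,r))`. -/
theorem stmt_2 (μ : Measure ℂ) [IsFiniteMeasure μ] (hK : IsCompact (msupport μ))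
    (c : ℂ) (r : ℝ) (hr : 0 < r)
    (hdisj : Metric.sphere c r ∩ msupport μ = ∅) :
    (∮ z in C(c, r), cauchyTransform μ z) = ((μ (Metric.ball c r)).toReal : ℂ) := by
  set K := msupport μ with hKdef
  have hKclosed : IsClosed K := msupport_isClosed μ
  have hKnull : μ Kᶜ = 0 := msupport_compl_null μ
  rcases Set.eq_empty_or_nonempty K with hKemp | hKne
  · -- μ = 0
    have hμ0 : μ = 0 := by
      rw [← MeasureTheory.Measure.measure_univ_eq_zero, ← Set.compl_empty, ← hKemp]; exact hKnull
    subst hμ0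
    simp [cauchyTransform, circleIntegral]
  -- positive distance between the sphere and K
  obtain ⟨δ, hδ0, hδ⟩ : ∃ δ > 0, ∀ z ∈ Metric.sphere c r, ∀ t ∈ K, δ ≤ dist z t := by
    have hcont : ContinuousOn (fun z => Metric.infDist z K) (Metric.sphere c r) :=
      (Metric.continuous_infDist_pt K).continuousOn
    rcases (isCompact_sphere c r).exists_isMinOn (NormedSpace.sphere_nonempty.2 hr.le)
        hcont with ⟨z₀, hz₀, hmin⟩
    have hz₀K : z₀ ∉ K := fun h => by
      have : z₀ ∈ Metric.sphere c r ∩ K := ⟨hz₀, h⟩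
      rw [hdisj] at this; exact this
    have hpos : 0 < Metric.infDist z₀ K :=
      (hKclosed.notMem_iff_infDist_pos hKne).1 hz₀K
    exact ⟨Metric.infDist z₀ K, hpos, fun z hz t ht =>
      le_trans (hmin hz) (Metric.infDist_le_dist_of_mem ht)⟩
  -- the integrand over the product space
  set f : ℝ → ℂ → ℂ := fun θ t => deriv (circleMap c r) θ • (circleMap c r θ - t)⁻¹ with hf
  set P : Measure (ℝ × ℂ) := (volume.restrict (Set.Ioc 0 (2 * Real.pi))).prod μ with hP
  haveI : IsFiniteMeasure (volume.restrict (Set.Ioc 0 (2 * Real.pi))) := by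
    constructor
    rw [Measure.restrict_apply_univ, Real.volume_Ioc]
    exact ENNReal.ofReal_lt_top
  have hmeasF : Measurable (Function.uncurry f) := by
    have h1 : Measurable fun p : ℝ × ℂ => circleMap c r p.1 - p.2 :=
      (((continuous_circleMap c r).comp continuous_fst).sub continuous_snd).measurable
    have h2 : Measurable fun p : ℝ × ℂ => deriv (circleMap c r) p.1 := by
      simp only [deriv_circleMap]
      exact (((continuous_circleMap 0 r).mul continuous_const).comp continuous_fst).measurable
    exact h2.smul h1.inv
  have haeK : ∀ᵐ p ∂P, p.2 ∈ K := by
    rw [ae_iff]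
    have hset : {p : ℝ × ℂ | ¬ p.2 ∈ K} = Set.univ ×ˢ Kᶜ := by
      ext p; simp
    rw [hset, hP, Measure.prod_prod, hKnull, mul_zero]
  have hint : Integrable (Function.uncurry f) P := by
    refine Integrable.mono' (integrable_const (|r| * δ⁻¹)) hmeasF.aestronglyMeasurable ?_
    filter_upwards [haeK] with p hp
    have hz : circleMap c r p.1 ∈ Metric.sphere c r := circleMap_mem_sphere c hr.le p.1
    have hdist : δ ≤ dist (circleMap c r p.1) p.2 := hδ _ hz _ hp
    have : ‖(circleMap c r p.1 - p.2)⁻¹‖ ≤ δ⁻¹ := by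
      rw [norm_inv]
      apply inv_anti₀ hδ0
      rw [← dist_eq_norm]; exact hdist
    calc ‖Function.uncurry f p‖ = ‖deriv (circleMap c r) p.1‖ * ‖(circleMap c r p.1 - p.2)⁻¹‖ :=
          norm_smul _ _
      _ ≤ |r| * δ⁻¹ := by
          apply mul_le_mul _ this (norm_nonneg _) (abs_nonneg r)
          rw [deriv_circleMap, norm_mul, norm_circleMap_zero, Complex.norm_I, mul_one]
  -- swap the integrals
  have key : (∮ z in C(c, r), ∫ t, (z - t)⁻¹ ∂μ) = ∫ t, (∮ z in C(c, r), (z - t)⁻¹) ∂μ := by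
    simp only [circleIntegral]
    simp_rw [← integral_smul]
    rw [intervalIntegral.integral_of_le Real.two_pi_pos.le,
      MeasureTheory.integral_integral_swap hint]
    simp_rw [intervalIntegral.integral_of_le Real.two_pi_pos.le]
    rfl
  -- evaluate the inner circle integral
  have haeμ : ∀ᵐ t ∂μ, t ∈ K := by
    rw [ae_iff]
    exact hKnull
  have heval : ∀ᵐ t ∂μ, (∮ z in C(c, r), (z - t)⁻¹)
      = Set.indicator (Metric.ball c r) (fun _ => (2 * Real.pi * Complex.I : ℂ)) t := by
    filter_upwards [haeμ] with t ht
    have hts : t ∉ Metric.sphere c r := fun h => by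
      have : t ∈ Metric.sphere c r ∩ K := ⟨h, ht⟩
      rw [hdisj] at this; exact this
    by_cases htb : t ∈ Metric.ball c r
    · rw [Set.indicator_of_mem htb]
      exact circleIntegral.integral_sub_inv_of_mem_ball htb
    · rw [Set.indicator_of_notMem htb]
      have htc : t ∉ Metric.closedBall c r := by
        intro h
        rcases lt_or_eq_of_le (Metric.mem_closedBall.1 h) with h' | h'
        · exact htb (Metric.mem_ball.2 h')
        · exact hts (Metric.mem_sphere.2 h')
      refine circleIntegral_eq_zero_of_differentiable_on_off_countable hr.le
        Set.countable_empty ?_ ?_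
      · refine ContinuousOn.inv₀ (by fun_prop) ?_
        intro z hz
        exact sub_ne_zero.2 (ne_of_mem_of_not_mem hz htc)
      · intro z hz
        refine DifferentiableAt.inv (by fun_prop) ?_
        exact sub_ne_zero.2 (ne_of_mem_of_not_mem (Metric.ball_subset_closedBall hz.1) htc)
  have hev : (∫ t, (∮ z in C(c, r), (z - t)⁻¹) ∂μ)
      = ((μ (Metric.ball c r)).toReal : ℝ) • (2 * Real.pi * Complex.I : ℂ) := by
    rw [integral_congr_ae heval, integral_indicator_const _ measurableSet_ball]
    rfl
  -- assemble
  have hpull : (∮ z in C(c, r), cauchyTransform μ z)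
      = (1 / (2 * Real.pi * Complex.I) : ℂ) • ∮ z in C(c, r), ∫ t, (z - t)⁻¹ ∂μ := by
    rw [← circleIntegral.integral_smul]
    simp [cauchyTransform, smul_eq_mul]
  rw [hpull, key, hev]
  have hne : (2 * Real.pi * Complex.I : ℂ) ≠ 0 := by
    simp [Real.pi_ne_zero, Complex.I_ne_zero]
  rw [smul_eq_mul, Complex.real_smul]
  field_simp
end

section
/- Let μ be the Cantor–Lebesgue measure, i.e. the Borel probability measure on ℝ supported on the ternary Cantor set satisfying the self-similarity relation μ = ½·(T₀)_*μ + ½·(T₁)_*μ, where T₀(x) = x/3 and T₁(x) = (x+2)/3. Then for every open set U ⊆ ℝ whose topological frontier is disjoint from the ternary Cantor set, the value μ(U) is a dyadic rational: there exist natural numbers m and k with μ(U) = m/2^k. -/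
open MeasureTheory ENNReal

namespace CantorAux

open Set

/-- The two contraction maps. -/
noncomputable def T (b : Bool) (x : ℝ) : ℝ := (x + (if b then 2 else 0)) / 3

lemma T_injective (b : Bool) : Function.Injective (T b) := fun x y h => by
  simp only [T, div_eq_div_iff, (by norm_num : (3:ℝ) ≠ 0)] at h
  nlinarith [h]

lemma T_continuous (b : Bool) : Continuous (T b) := by
  unfold T; fun_prop

lemma dist_T (b : Bool) (x y : ℝ) : dist (T b x) (T b y) = dist x y / 3 := by
  simp only [T, Real.dist_eq]
  rw [show (x + if b then 2 else 0) / 3 - (y + if b then 2 else 0) / 3 = (x - y) / 3 by ring,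
    abs_div]
  norm_num

lemma T_false_mem (x : ℝ) (hx : x ∈ Icc (0:ℝ) 1) : T false x ∈ Icc (0:ℝ) (1/3) := by
  simp only [T, if_neg (Bool.false_ne_true)]
  obtain ⟨h0, h1⟩ := hx
  constructor <;> [linarith; linarith]

lemma T_true_mem (x : ℝ) (hx : x ∈ Icc (0:ℝ) 1) : T true x ∈ Icc (2/3:ℝ) 1 := by
  have hT : T true x = (x + 2) / 3 := by simp [T]
  rw [hT]
  obtain ⟨h0, h1⟩ := hx
  constructor <;> [linarith; linarith]

lemma preCantorSet_subset (n : ℕ) : preCantorSet n ⊆ Icc (0:ℝ) 1 := by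
  induction n with
  | zero => simp [preCantorSet]
  | succ n ih =>
    rintro x (⟨y, hy, rfl⟩ | ⟨y, hy, rfl⟩)
    · have := ih hy
      constructor
      · simp; linarith [this.1]
      · simp; linarith [this.2]
    · have := ih hy
      constructor
      · simp; linarith [this.1]
      · simp; linarith [this.2]

lemma T_image_pre (b : Bool) (n : ℕ) :
    T b '' preCantorSet n ⊆ preCantorSet (n + 1) := by
  rintro x ⟨y, hy, rfl⟩
  cases b with
  | false => exact Or.inl ⟨y, hy, by simp [T]⟩
  | true => exact Or.inr ⟨y, hy, by simp [T]; ring⟩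

/-- self-similarity of the Cantor set -/
lemma cantorSet_self :
    cantorSet = T false '' cantorSet ∪ T true '' cantorSet := by
  apply Set.Subset.antisymm
  · intro x hx
    have hx1 : x ∈ preCantorSet 1 := Set.mem_iInter.mp hx 1
    rcases hx1 with ⟨y, hy, rfl⟩ | ⟨y, hy, rfl⟩
    · left
      refine ⟨y, ?_, by simp [T]⟩
      refine Set.mem_iInter.mpr fun n => ?_
      have hxn : y / 3 ∈ preCantorSet (n + 1) := Set.mem_iInter.mp hx (n + 1)
      rcases hxn with ⟨z, hz, hz'⟩ | ⟨z, hz, hz'⟩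
      · have : z = y := by
          field_simp at hz'; linarith
        rwa [← this]
      · exfalso
        have h1 := (preCantorSet_subset n hz).1
        have h2 := (preCantorSet_subset 0 hy).2
        have h3 := (preCantorSet_subset 0 hy).1
        simp only at hz'
        nlinarith
    · right
      refine ⟨y, ?_, by simp [T]; ring⟩
      refine Set.mem_iInter.mpr fun n => ?_
      have hxn : (2 + y) / 3 ∈ preCantorSet (n + 1) := Set.mem_iInter.mp hx (n + 1)
      rcases hxn with ⟨z, hz, hz'⟩ | ⟨z, hz, hz'⟩
      · exfalso
        have h1 := (preCantorSet_subset n hz).2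
        have h3 := (preCantorSet_subset 0 hy).1
        simp only at hz'
        nlinarith
      · have : z = y := by
          field_simp at hz'; linarith
        rwa [← this]
  · rintro x (⟨y, hy, rfl⟩ | ⟨y, hy, rfl⟩) <;>
    · refine Set.mem_iInter.mpr fun n => ?_
      cases n with
      | zero =>
        first
        | exact Icc_subset_Icc (le_refl _) (by norm_num) (T_false_mem y (preCantorSet_subset 0 (Set.mem_iInter.mp hy 0)))
        | exact Icc_subset_Icc (by norm_num) (le_refl _) (T_true_mem y (preCantorSet_subset 0 (Set.mem_iInter.mp hy 0)))
      | succ n =>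
        exact T_image_pre _ n ⟨y, Set.mem_iInter.mp hy n, rfl⟩

lemma T_image_cantor (b : Bool) : T b '' cantorSet ⊆ cantorSet := by
  intro x hx
  rw [cantorSet_self]
  cases b
  · exact Or.inl hx
  · exact Or.inr hx

/-- Cylinder sets. -/
noncomputable def cyl : List Bool → Set ℝ
  | [] => cantorSet
  | b :: w => T b '' cyl w

lemma cyl_subset_cantorSet (w : List Bool) : cyl w ⊆ cantorSet := by
  induction w with
  | nil => exact le_refl _
  | cons b w ih =>
    exact (Set.image_mono ih).trans (T_image_cantor b)

lemma cyl_isCompact (w : List Bool) : IsCompact (cyl w) := by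
  induction w with
  | nil => exact isCompact_cantorSet
  | cons b w ih => exact ih.image (T_continuous b)

lemma cyl_measurable (w : List Bool) : MeasurableSet (cyl w) :=
  (cyl_isCompact w).isClosed.measurableSet

lemma cyl_diam {w : List Bool} {x y : ℝ} (hx : x ∈ cyl w) (hy : y ∈ cyl w) :
    dist x y ≤ (1/3 : ℝ) ^ w.length := by
  induction w generalizing x y with
  | nil =>
    have h1 := cantorSet_subset_unitInterval hx
    have h2 := cantorSet_subset_unitInterval hy
    rw [Real.dist_eq]
    simp only [List.length_nil, pow_zero]
    rw [abs_le]
    constructor <;> [linarith [h1.1, h1.2, h2.1, h2.2]; linarith [h1.1, h1.2, h2.1, h2.2]]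
  | cons b w ih =>
    obtain ⟨x', hx', rfl⟩ := hx
    obtain ⟨y', hy', rfl⟩ := hy
    rw [dist_T]
    have := ih hx' hy'
    simp only [List.length_cons, pow_succ]
    linarith

lemma cyl_mem_first_false {w : List Bool} {x : ℝ} (hx : x ∈ cyl (false :: w)) :
    x ≤ 1/3 := by
  obtain ⟨y, hy, rfl⟩ := hx
  exact (T_false_mem y (cantorSet_subset_unitInterval (cyl_subset_cantorSet w hy))).2

lemma cyl_mem_first_true {w : List Bool} {x : ℝ} (hx : x ∈ cyl (true :: w)) :
    2/3 ≤ x := by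
  obtain ⟨y, hy, rfl⟩ := hx
  exact (T_true_mem y (cantorSet_subset_unitInterval (cyl_subset_cantorSet w hy))).1

lemma cyl_disjoint : ∀ (w v : List Bool), w.length = v.length → w ≠ v →
    Disjoint (cyl w) (cyl v) := by
  intro w
  induction w with
  | nil => intro v hlen hne; cases v <;> simp_all
  | cons b w ih =>
    rintro (_ | ⟨c, v⟩) hlen hne
    · simp at hlen
    · simp only [List.length_cons, Nat.succ.injEq] at hlen
      by_cases hbc : b = c
      · subst hbc
        have hwv : w ≠ v := fun h => hne (by rw [h])
        have := ih v hlen hwv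
        exact (Set.disjoint_image_image fun x hx y hy hxy =>
          this.ne_of_mem hx hy (T_injective b hxy))
      · rw [Set.disjoint_left]
        intro x hx hx'
        cases b <;> cases c <;> try (exact hbc rfl)
        · have h1 := cyl_mem_first_false hx
          have h2 := cyl_mem_first_true hx'
          linarith
        · have h1 := cyl_mem_first_true hx
          have h2 := cyl_mem_first_false hx'
          linarith

/-- Enumeration of words of length n. -/
def enum : ℕ → Finset (List Bool)
  | 0 => {[]}
  | n + 1 => (enum n).image (false :: ·) ∪ (enum n).image (true :: ·)

lemma length_of_mem_enum {n : ℕ} {w : List Bool} (hw : w ∈ enum n) : w.length = n := by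
  induction n generalizing w with
  | zero => simp [enum] at hw; simp [hw]
  | succ n ih =>
    simp only [enum, Finset.mem_union, Finset.mem_image] at hw
    rcases hw with ⟨v, hv, rfl⟩ | ⟨v, hv, rfl⟩ <;> simp [ih hv]

lemma biUnion_enum_cyl (n : ℕ) : ⋃ w ∈ enum n, cyl w = cantorSet := by
  induction n with
  | zero => simp [enum, cyl]
  | succ n ih =>
    rw [cantorSet_self, ← ih]
    ext x
    simp only [enum, Finset.mem_union, Finset.mem_image, Set.mem_iUnion, Set.mem_union,
      Set.mem_image]
    constructor
    · rintro ⟨w, (⟨v, hv, rfl⟩ | ⟨v, hv, rfl⟩), hx⟩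
      · exact Or.inl (by obtain ⟨y, hy, rfl⟩ := hx; exact ⟨y, ⟨v, hv, hy⟩, rfl⟩)
      · exact Or.inr (by obtain ⟨y, hy, rfl⟩ := hx; exact ⟨y, ⟨v, hv, hy⟩, rfl⟩)
    · rintro (⟨y, ⟨v, hv, hy⟩, rfl⟩ | ⟨y, ⟨v, hv, hy⟩, rfl⟩)
      · exact ⟨false :: v, Or.inl ⟨v, hv, rfl⟩, ⟨y, hy, rfl⟩⟩
      · exact ⟨true :: v, Or.inr ⟨v, hv, rfl⟩, ⟨y, hy, rfl⟩⟩

end CantorAux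

open CantorAux Set

/-- If `μ` is the Cantor–Lebesgue measure (the Borel probability measure on `ℝ`
supported on the ternary Cantor set satisfying the self-similarity relation
`μ = ½ (T₀)_* μ + ½ (T₁)_* μ` with `T₀ x = x/3`, `T₁ x = (x+2)/3`), then the measure
of any open set whose frontier is disjoint from the Cantor set is a dyadic rational. -/
theorem stmt_5 (μ : Measure ℝ) [IsProbabilityMeasure μ]
    (hsupp : μ cantorSetᶜ = 0)
    (hself : μ = (1 / 2 : ℝ≥0∞) • Measure.map (fun x : ℝ => x / 3) μ
      + (1 / 2 : ℝ≥0∞) • Measure.map (fun x : ℝ => (x + 2) / 3) μ) :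
    ∀ U : Set ℝ, IsOpen U → frontier U ∩ cantorSet = ∅ →
      ∃ m k : ℕ, μ U = (m : ℝ≥0∞) / 2 ^ k := by
  classical
  -- auxiliary: sets disjoint from the Cantor set are null
  have hnull : ∀ S : Set ℝ, S ∩ cantorSet = ∅ → μ S = 0 := by
    intro S hS
    have : S ⊆ cantorSetᶜ := fun x hx hx' => Set.eq_empty_iff_forall_notMem.mp hS x ⟨hx, hx'⟩
    exact le_antisymm (le_trans (measure_mono this) hsupp.le) zero_le
  have hmeas0 : Measurable (fun x : ℝ => x / 3) := by fun_prop
  have hmeas1 : Measurable (fun x : ℝ => (x + 2) / 3) := by fun_prop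
  -- the measure of every cylinder
  have hcylmeas : ∀ w : List Bool, μ (cyl w) = (1/2 : ℝ≥0∞) ^ w.length := by
    intro w
    induction w with
    | nil =>
      simp only [cyl, List.length_nil, pow_zero]
      have := measure_add_measure_compl (μ := μ) isClosed_cantorSet.measurableSet
      rw [hsupp, add_zero] at this
      rw [this, measure_univ]
    | cons b w ih =>
      have hA : MeasurableSet (cyl (b :: w)) := cyl_measurable _
      have happ : μ (cyl (b :: w)) =
          (1/2 : ℝ≥0∞) * μ ((fun x : ℝ => x / 3) ⁻¹' cyl (b :: w))
          + (1/2 : ℝ≥0∞) * μ ((fun x : ℝ => (x + 2) / 3) ⁻¹' cyl (b :: w)) := by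
        conv_lhs => rw [hself]
        rw [Measure.add_apply, Measure.smul_apply, Measure.smul_apply,
          Measure.map_apply hmeas0 hA, Measure.map_apply hmeas1 hA, smul_eq_mul, smul_eq_mul]
      -- identify the two preimages
      cases b with
      | false =>
        have hpre0 : (fun x : ℝ => x / 3) ⁻¹' cyl (false :: w) = cyl w := by
          have : (fun x : ℝ => x / 3) = T false := by funext x; simp [T]
          rw [this]
          exact Set.preimage_image_eq _ (T_injective false)
        have hpre1 : μ ((fun x : ℝ => (x + 2) / 3) ⁻¹' cyl (false :: w)) = 0 := by
          apply hnull
          rw [Set.eq_empty_iff_forall_notMem]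
          rintro x ⟨hx, hxC⟩
          have h1 : (x + 2) / 3 ≤ 1/3 := cyl_mem_first_false hx
          have h2 := (cantorSet_subset_unitInterval hxC).1
          linarith
        rw [happ, hpre0, hpre1, mul_zero, add_zero, ih, List.length_cons, pow_succ]
        ring
      | true =>
        have hpre1 : (fun x : ℝ => (x + 2) / 3) ⁻¹' cyl (true :: w) = cyl w := by
          have : (fun x : ℝ => (x + 2) / 3) = T true := by funext x; simp [T]
          rw [this]
          exact Set.preimage_image_eq _ (T_injective true)
        have hpre0 : μ ((fun x : ℝ => x / 3) ⁻¹' cyl (true :: w)) = 0 := by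
          apply hnull
          rw [Set.eq_empty_iff_forall_notMem]
          rintro x ⟨hx, hxC⟩
          have h1 : 2/3 ≤ x / 3 := cyl_mem_first_true hx
          have h2 := (cantorSet_subset_unitInterval hxC).2
          linarith
        rw [happ, hpre1, hpre0, mul_zero, zero_add, ih, List.length_cons, pow_succ]
        ring
  intro U hU hfront
  set K : Set ℝ := U ∩ cantorSet with hKdef
  -- K is compact
  have hKclosure : K = closure U ∩ cantorSet := by
    apply Set.Subset.antisymm
    · exact Set.inter_subset_inter_left _ subset_closure
    · rintro x ⟨hx, hxC⟩
      rw [closure_eq_self_union_frontier] at hx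
      rcases hx with hx | hx
      · exact ⟨hx, hxC⟩
      · exact (Set.eq_empty_iff_forall_notMem.mp hfront x ⟨hx, hxC⟩).elim
  have hKcomp : IsCompact K := by
    rw [hKclosure]
    exact isCompact_cantorSet.inter_left isClosed_closure
  have hKU : K ⊆ U := Set.inter_subset_left
  obtain ⟨δ, hδpos, hδ⟩ := hKcomp.exists_thickening_subset_open hU hKU
  obtain ⟨n, hn⟩ := exists_pow_lt_of_lt_one hδpos (by norm_num : (1/3 : ℝ) < 1)
  set W : Finset (List Bool) := (enum n).filter (fun w => (cyl w ∩ K).Nonempty) with hWdef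
  have hWlen : ∀ w ∈ W, w.length = n := by
    intro w hw
    rw [hWdef] at hw
    exact length_of_mem_enum (Finset.mem_filter.mp hw).1
  have hcover : U ∩ cantorSet = ⋃ w ∈ W, cyl w := by
    apply Set.Subset.antisymm
    · rintro x ⟨hxU, hxC⟩
      have : x ∈ ⋃ w ∈ enum n, cyl w := (biUnion_enum_cyl n).symm ▸ hxC
      obtain ⟨w, hw, hxw⟩ := Set.mem_iUnion₂.mp this
      refine Set.mem_iUnion₂.mpr ⟨w, ?_, hxw⟩
      rw [hWdef]
      exact Finset.mem_filter.mpr ⟨hw, ⟨x, hxw, hxU, hxC⟩⟩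
    · intro x hx
      obtain ⟨w, hw, hxw⟩ := Set.mem_iUnion₂.mp hx
      rw [hWdef] at hw
      obtain ⟨hwenum, y, hyw, hyK⟩ := Finset.mem_filter.mp hw
      have hdist : dist x y ≤ (1/3 : ℝ) ^ n := by
        rw [← length_of_mem_enum hwenum]
        exact cyl_diam hxw hyw
      have hxU : x ∈ U := hδ (Metric.mem_thickening_iff.mpr ⟨y, hyK, lt_of_le_of_lt hdist hn⟩)
      exact ⟨hxU, cyl_subset_cantorSet w hxw⟩
  have hμU : μ U = μ (U ∩ cantorSet) := by
    apply le_antisymm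
    · calc μ U ≤ μ (U ∩ cantorSet) + μ (U \ cantorSet) := measure_le_inter_add_diff μ U cantorSet
        _ = μ (U ∩ cantorSet) + 0 := by
            rw [hnull (U \ cantorSet)
              (by rw [Set.diff_eq, Set.inter_assoc, Set.compl_inter_self, Set.inter_empty])]
        _ = μ (U ∩ cantorSet) := add_zero _
    · exact measure_mono Set.inter_subset_left
  have hsum : μ (⋃ w ∈ W, cyl w) = ∑ w ∈ W, μ (cyl w) := by
    apply measure_biUnion_finset
    · intro w hw v hv hwv
      exact cyl_disjoint w v
        (by rw [hWlen w (Finset.mem_coe.mp hw), hWlen v (Finset.mem_coe.mp hv)]) hwv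
    · intro w _; exact cyl_measurable w
  refine ⟨W.card, n, ?_⟩
  rw [hμU, hcover, hsum]
  have : ∀ w ∈ W, μ (cyl w) = (1/2 : ℝ≥0∞) ^ n := by
    intro w hw
    rw [hcylmeas w, hWlen w hw]
  rw [Finset.sum_congr rfl this, Finset.sum_const, nsmul_eq_mul, one_div,
    ← ENNReal.inv_pow, ← div_eq_mul_inv]
end

section
/- Let μ be the Cantor–Lebesgue measure on the ternary Cantor set. For every natural number k and every natural number m with m ≤ 2^k, there exists an open set U ⊆ ℝ whose topological frontier is disjoint from the ternary Cantor set and such that μ(U) = m/2^k. Consequently the set of values {μ(U) : U open, frontier(U) ∩ cantorSet = ∅} is exactly the set of dyadic rationals in [0,1]. -/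
open MeasureTheory ENNReal
open Set

set_option linter.unusedSectionVars false


lemma preCantorSet_subset_Icc (n : ℕ) : preCantorSet n ⊆ Set.Icc 0 1 := by
  induction n with
  | zero => simp [preCantorSet]
  | succ n ih =>
    rintro x (⟨y, hy, rfl⟩ | ⟨y, hy, rfl⟩) <;> obtain ⟨h0, h1⟩ := ih hy <;>
      constructor <;> simp only <;> linarith

lemma cantor_left {x : ℝ} (hx : x ∈ cantorSet) (h : x < 2/3) : 3 * x ∈ cantorSet := by
  rw [cantorSet, Set.mem_iInter] at hx ⊢
  intro n
  rcases hx (n + 1) with ⟨y, hy, hxy⟩ | ⟨y, hy, hxy⟩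
  · simp only at hxy
    have : 3 * x = y := by rw [← hxy]; ring
    rwa [this]
  · exfalso
    obtain ⟨h0, h1⟩ := preCantorSet_subset_Icc n hy
    simp only at hxy
    linarith [hxy ▸ h]

lemma cantor_right {x : ℝ} (hx : x ∈ cantorSet) (h : 1/3 < x) : 3 * x - 2 ∈ cantorSet := by
  rw [cantorSet, Set.mem_iInter] at hx ⊢
  intro n
  rcases hx (n + 1) with ⟨y, hy, hxy⟩ | ⟨y, hy, hxy⟩
  · exfalso
    obtain ⟨h0, h1⟩ := preCantorSet_subset_Icc n hy
    simp only at hxy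
    linarith [hxy ▸ h]
  · simp only at hxy
    have : 3 * x - 2 = y := by rw [← hxy]; ring
    rwa [this]

noncomputable def tt : ℕ → ℕ → ℝ
  | 0, m => if m = 0 then -(1/2) else 3/2
  | (k+1), m => if m ≤ 2^k then tt k m / 3 else (tt k (m - 2^k) + 2) / 3

lemma tt_bounds : ∀ k m, -(1/2) ≤ tt k m ∧ tt k m ≤ 3/2 := by
  intro k
  induction k with
  | zero => intro m; by_cases h : m = 0 <;> simp [tt, h] <;> norm_num
  | succ k ih =>
    intro m
    rw [tt]
    split
    · obtain ⟨h1, h2⟩ := ih m; constructor <;> linarith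
    · obtain ⟨h1, h2⟩ := ih (m - 2^k); constructor <;> linarith

lemma tt_zero_neg : ∀ k, tt k 0 < 0 := by
  intro k; induction k with
  | zero => norm_num [tt]
  | succ k ih => rw [tt, if_pos (Nat.zero_le _)]; linarith

lemma tt_one_pos : ∀ k, 0 < tt k 1 := by
  intro k; induction k with
  | zero => norm_num [tt]
  | succ k ih => rw [tt, if_pos (Nat.one_le_two_pow)]; linarith

lemma tt_top : ∀ k, 1 < tt k (2^k) := by
  intro k; induction k with
  | zero => norm_num [tt]
  | succ k ih =>
    have hp : (1:ℕ) ≤ 2^k := Nat.one_le_two_pow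
    rw [tt, if_neg (by rw [pow_succ]; omega)]
    have : 2^(k+1) - 2^k = 2^k := by rw [pow_succ]; omega
    rw [this]; linarith

lemma tt_notMem : ∀ k m, tt k m ∉ cantorSet := by
  intro k
  induction k with
  | zero =>
    intro m hm
    obtain ⟨h0, h1⟩ := cantorSet_subset_unitInterval hm
    by_cases h : m = 0 <;> simp [tt, h] at h0 h1 <;> linarith
  | succ k ih =>
    intro m hm
    rw [tt] at hm
    split at hm
    · obtain ⟨_, h2⟩ := tt_bounds k m
      have := cantor_left hm (by linarith)
      have he : 3 * (tt k m / 3) = tt k m := by ring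
      exact ih m (he ▸ this)
    · obtain ⟨h1, _⟩ := tt_bounds k (m - 2^k)
      have := cantor_right hm (by linarith)
      have he : 3 * ((tt k (m - 2^k) + 2) / 3) - 2 = tt k (m - 2^k) := by ring
      exact ih (m - 2^k) (he ▸ this)

lemma tt_strictMono : ∀ k m, m < 2^k → tt k m < tt k (m+1) := by
  intro k
  induction k with
  | zero =>
    intro m hm
    interval_cases m
    norm_num [tt]
  | succ k ih =>
    intro m hm
    rcases lt_trichotomy m (2^k) with h | h | h
    · rw [tt, tt, if_pos h.le, if_pos (by omega)]
      have := ih m h; linarith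
    · subst h
      have hp : (1:ℕ) ≤ 2^k := Nat.one_le_two_pow
      rw [tt, tt, if_pos le_rfl, if_neg (by omega)]
      have h1 : 2^k + 1 - 2^k = 1 := by omega
      rw [h1]
      have := tt_one_pos k
      have := (tt_bounds k (2^k)).2
      linarith
    · have hp : (1:ℕ) ≤ 2^k := Nat.one_le_two_pow
      rw [tt, tt, if_neg (by omega), if_neg (by omega)]
      have h1 : m + 1 - 2^k = (m - 2^k) + 1 := by omega
      rw [h1]
      have := ih (m - 2^k) (by omega)
      linarith

lemma tt_mono (k : ℕ) {i j : ℕ} (hij : i ≤ j) (hj : j ≤ 2^k) : tt k i ≤ tt k j := by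
  induction j with
  | zero => simp_all
  | succ j ihj =>
    rcases Nat.lt_or_ge i (j+1) with h | h
    · have := tt_strictMono k j (by omega)
      have := ihj (by omega) (by omega)
      linarith
    · have : i = j + 1 := by omega
      simp [this]

section
variable (μ : Measure ℝ) [IsProbabilityMeasure μ]

lemma mu_cantor (hsupp : μ cantorSetᶜ = 0) : μ cantorSet = 1 := by
  have h := measure_add_measure_compl (μ := μ) isClosed_cantorSet.measurableSet
  rw [hsupp, add_zero] at h
  simpa using h

lemma mu_Iio_zero (hsupp : μ cantorSetᶜ = 0) {u : ℝ} (hu : u ≤ 0) : μ (Set.Iio u) = 0 := by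
  refine measure_mono_null ?_ hsupp
  intro x hx hxc
  have := (cantorSet_subset_unitInterval hxc).1
  simp only [Set.mem_Iio] at hx
  linarith

lemma mu_Iio_one (hsupp : μ cantorSetᶜ = 0) {u : ℝ} (hu : 1 < u) : μ (Set.Iio u) = 1 := by
  refine le_antisymm prob_le_one ?_
  rw [← mu_cantor μ hsupp]
  refine measure_mono fun x hx => ?_
  have := (cantorSet_subset_unitInterval hx).2
  simp only [Set.mem_Iio]; linarith

lemma mu_key (hself : μ = (1 / 2 : ℝ≥0∞) • Measure.map (fun x : ℝ => x / 3) μ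
      + (1 / 2 : ℝ≥0∞) • Measure.map (fun x : ℝ => (x + 2) / 3) μ) (s : ℝ) :
    μ (Set.Iio s) = 1/2 * μ (Set.Iio (3*s)) + 1/2 * μ (Set.Iio (3*s - 2)) := by
  have h1 : (fun x : ℝ => x / 3) ⁻¹' Set.Iio s = Set.Iio (3*s) := by
    ext x; simp only [Set.mem_preimage, Set.mem_Iio]
    constructor <;> intro <;> linarith
  have h2 : (fun x : ℝ => (x + 2) / 3) ⁻¹' Set.Iio s = Set.Iio (3*s - 2) := by
    ext x; simp only [Set.mem_preimage, Set.mem_Iio]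
    constructor <;> intro <;> linarith
  nth_rewrite 1 [hself]
  rw [Measure.add_apply, Measure.smul_apply, Measure.smul_apply,
    Measure.map_apply (show Measurable fun x : ℝ => x / 3 by fun_prop) measurableSet_Iio,
    Measure.map_apply (show Measurable fun x : ℝ => (x + 2) / 3 by fun_prop) measurableSet_Iio,
    h1, h2, smul_eq_mul, smul_eq_mul]

lemma ennreal_half_div (m : ℕ) (k : ℕ) :
    (1/2 : ℝ≥0∞) * ((m : ℝ≥0∞) / 2^k) = (m : ℝ≥0∞) / 2^(k+1) := by
  rw [one_div, div_eq_mul_inv, div_eq_mul_inv, pow_succ,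
    ENNReal.mul_inv (Or.inl (by positivity)) (Or.inl (by simp))]
  ring

lemma ennreal_half_eq (k : ℕ) : (1/2 : ℝ≥0∞) = (2^k : ℝ≥0∞) / 2^(k+1) := by
  rw [one_div, div_eq_mul_inv, pow_succ,
    ENNReal.mul_inv (Or.inl (by positivity)) (Or.inl (by simp)), ← mul_assoc,
    ENNReal.mul_inv_cancel (by positivity) (by simp), one_mul]

lemma mu_tt (hsupp : μ cantorSetᶜ = 0)
    (hself : μ = (1 / 2 : ℝ≥0∞) • Measure.map (fun x : ℝ => x / 3) μ
      + (1 / 2 : ℝ≥0∞) • Measure.map (fun x : ℝ => (x + 2) / 3) μ) :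
    ∀ k m, m ≤ 2^k → μ (Set.Iio (tt k m)) = (m : ℝ≥0∞) / 2^k := by
  intro k
  induction k with
  | zero =>
    intro m hm
    interval_cases m
    · rw [mu_Iio_zero μ hsupp (by norm_num [tt])]; simp
    · rw [mu_Iio_one μ hsupp (by norm_num [tt])]; simp
  | succ k ih =>
    intro m hm
    by_cases h : m ≤ 2^k
    · rw [tt, if_pos h, mu_key μ hself]
      have e1 : 3 * (tt k m / 3) = tt k m := by ring
      have e2 : 3 * (tt k m / 3) - 2 ≤ 0 := by
        have := (tt_bounds k m).2; linarith
      rw [e1] at *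
      rw [mu_Iio_zero μ hsupp e2, mul_zero, add_zero, ih m h, ennreal_half_div]
    · obtain ⟨m', rfl⟩ : ∃ m', m = 2^k + m' := ⟨m - 2^k, by omega⟩
      have hsub : 2^k + m' - 2^k = m' := by omega
      rw [tt, if_neg h, hsub, mu_key μ hself]
      set s := tt k m' with hs
      have e1 : 3 * ((s + 2) / 3) = s + 2 := by ring
      have e2 : 3 * ((s + 2) / 3) - 2 = s := by ring
      have hb := (tt_bounds k m').1
      rw [← hs] at hb
      rw [e2, e1, mu_Iio_one μ hsupp (by linarith), mul_one,
        ih m' (by rw [pow_succ] at hm; omega), ennreal_half_div,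
        ennreal_half_eq k, ENNReal.div_add_div_same]
      congr 1
      push_cast
      ring

end

lemma tt_diam : ∀ k j, j < 2^k → ∀ x y : ℝ, x ∈ cantorSet → y ∈ cantorSet →
    x ∈ Set.Ioo (tt k j) (tt k (j+1)) → y ∈ Set.Ioo (tt k j) (tt k (j+1)) →
    |x - y| ≤ (1/3)^k := by
  intro k
  induction k with
  | zero =>
    intro j hj x y hx hy hxm hym
    obtain ⟨hx0, hx1⟩ := cantorSet_subset_unitInterval hx
    obtain ⟨hy0, hy1⟩ := cantorSet_subset_unitInterval hy
    rw [abs_le]; constructor <;> simp <;> linarith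
  | succ k ih =>
    intro j hj x y hx hy hxm hym
    obtain ⟨hx1, hx2⟩ := hxm
    obtain ⟨hy1, hy2⟩ := hym
    have hp : (1:ℕ) ≤ 2^k := Nat.one_le_two_pow
    by_cases h : j + 1 ≤ 2^k
    · -- left-half case
      rw [tt, if_pos (by omega)] at hx1 hy1
      rw [tt, if_pos h] at hx2 hy2
      have hb := (tt_bounds k (j+1)).2
      have hx3 : 3 * x ∈ cantorSet := cantor_left hx (by linarith)
      have hy3 : 3 * y ∈ cantorSet := cantor_left hy (by linarith)
      have := ih j (by omega) (3*x) (3*y) hx3 hy3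
        ⟨by linarith, by linarith⟩ ⟨by linarith, by linarith⟩
      have habs : |x - y| = |3*x - 3*y| / 3 := by
        rw [show 3*x - 3*y = 3*(x-y) by ring, abs_mul]
        rw [abs_of_nonneg (by norm_num : (0:ℝ) ≤ 3)]
        ring
      rw [habs, pow_succ]
      linarith
    · -- right-half case
      have hxgt : 1/3 < x := by
        rcases Nat.eq_or_lt_of_le (by omega : 2^k ≤ j) with heq | hlt
        · rw [tt, if_pos (by omega), ← heq] at hx1
          have := tt_top k
          linarith
        · rw [tt, if_neg (by omega)] at hx1
          have := (tt_bounds k (j - 2^k)).1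
          linarith
      have hygt : 1/3 < y := by
        rcases Nat.eq_or_lt_of_le (by omega : 2^k ≤ j) with heq | hlt
        · rw [tt, if_pos (by omega), ← heq] at hy1
          have := tt_top k
          linarith
        · rw [tt, if_neg (by omega)] at hy1
          have := (tt_bounds k (j - 2^k)).1
          linarith
      have hx3 : 3 * x - 2 ∈ cantorSet := cantor_right hx hxgt
      have hy3 : 3 * y - 2 ∈ cantorSet := cantor_right hy hygt
      -- upper bounds transfer: t (k+1) (j+1) = (tt k (j+1-2^k) + 2)/3
      rw [tt, if_neg (by omega)] at hx2 hy2
      -- choose the target index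
      rcases Nat.eq_or_lt_of_le (by omega : 2^k ≤ j) with heq | hlt
      · -- j = 2^k : use index 0 at level k
        have hj1 : j + 1 - 2^k = 1 := by omega
        rw [hj1] at hx2 hy2
        have h0x : tt k 0 < 3*x - 2 := lt_of_lt_of_le (tt_zero_neg k)
          (cantorSet_subset_unitInterval hx3).1
        have h0y : tt k 0 < 3*y - 2 := lt_of_lt_of_le (tt_zero_neg k)
          (cantorSet_subset_unitInterval hy3).1
        have := ih 0 (by omega) (3*x-2) (3*y-2) hx3 hy3
          ⟨h0x, by linarith⟩ ⟨h0y, by linarith⟩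
        have habs : |x - y| = |(3*x-2) - (3*y-2)| / 3 := by
          rw [show (3*x-2) - (3*y-2) = 3*(x-y) by ring, abs_mul]
          rw [abs_of_nonneg (by norm_num : (0:ℝ) ≤ 3)]
          ring
        rw [habs, pow_succ]
        linarith
      · -- j > 2^k
        rw [tt, if_neg (by omega)] at hx1 hy1
        have hj1 : j + 1 - 2^k = (j - 2^k) + 1 := by omega
        rw [hj1] at hx2 hy2
        have := ih (j - 2^k) (by omega) (3*x-2) (3*y-2) hx3 hy3
          ⟨by linarith, by linarith⟩ ⟨by linarith, by linarith⟩
        have habs : |x - y| = |(3*x-2) - (3*y-2)| / 3 := by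
          rw [show (3*x-2) - (3*y-2) = 3*(x-y) by ring, abs_mul]
          rw [abs_of_nonneg (by norm_num : (0:ℝ) ≤ 3)]
          ring
        rw [habs, pow_succ]
        linarith

open Classical in
lemma tt_cover (k : ℕ) {x : ℝ} (hx : x ∈ cantorSet) :
    ∃ j, j < 2^k ∧ x ∈ Set.Ioo (tt k j) (tt k (j+1)) := by
  obtain ⟨hx0, hx1⟩ := cantorSet_subset_unitInterval hx
  set P : ℕ → Prop := fun i => tt k i < x with hP
  have hP0 : P 0 := lt_of_lt_of_le (tt_zero_neg k) hx0
  set j := Nat.findGreatest P (2^k) with hj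
  have hspec : P j := Nat.findGreatest_spec (Nat.zero_le _) hP0
  have hjle : j ≤ 2^k := Nat.findGreatest_le _
  have hjlt : j < 2^k := by
    rcases Nat.eq_or_lt_of_le hjle with heq | h
    · exfalso
      have : tt k (2^k) < x := by rw [← heq]; exact hspec
      have := tt_top k
      linarith
    · exact h
  refine ⟨j, hjlt, hspec, ?_⟩
  have hng : ¬ P (j + 1) :=
    Nat.findGreatest_is_greatest (show Nat.findGreatest P (2^k) < j+1 from hj ▸ lt_add_one j)
      (show j+1 ≤ 2^k from by omega)
  rw [hP] at hng
  rcases lt_or_eq_of_le (not_lt.mp hng) with h | h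
  · exact h
  · exact absurd (h ▸ hx) (tt_notMem k (j+1))

section
variable (μ : Measure ℝ) [IsProbabilityMeasure μ]

lemma mu_piece (hsupp : μ cantorSetᶜ = 0)
    (hself : μ = (1 / 2 : ℝ≥0∞) • Measure.map (fun x : ℝ => x / 3) μ
      + (1 / 2 : ℝ≥0∞) • Measure.map (fun x : ℝ => (x + 2) / 3) μ)
    (k j : ℕ) (hj : j < 2^k) :
    μ (Set.Ioo (tt k j) (tt k (j+1))) = 1 / 2^k := by
  have hlt : tt k j < tt k (j+1) := tt_strictMono k j hj
  have hIco : μ (Set.Ico (tt k j) (tt k (j+1))) = 1 / 2^k := by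
    have hdis : Disjoint (Set.Iio (tt k j)) (Set.Ico (tt k j) (tt k (j+1))) := by
      rw [Set.disjoint_left]
      rintro a ha ⟨ha1, _⟩
      exact absurd ha1 (not_le.mpr ha)
    have hu : Set.Iio (tt k j) ∪ Set.Ico (tt k j) (tt k (j+1)) = Set.Iio (tt k (j+1)) :=
      Set.Iio_union_Ico_eq_Iio hlt.le
    have := measure_union (μ := μ) hdis measurableSet_Ico
    rw [hu, mu_tt μ hsupp hself k j (by omega), mu_tt μ hsupp hself k (j+1) (by omega)] at this
    have hfin : ((j:ℝ≥0∞) / 2^k) ≠ ∞ := by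
      exact (ENNReal.div_lt_top (by simp) (by positivity)).ne
    have hgoal : ((j:ℝ≥0∞) / 2^k) + 1/2^k = ((j:ℝ≥0∞)+1) / 2^k := by
      rw [ENNReal.div_add_div_same]
    rw [← Nat.cast_add_one] at hgoal
    rw [← hgoal] at this
    push_cast at this
    exact (ENNReal.add_right_inj hfin).mp this.symm
  refine le_antisymm (hIco ▸ measure_mono Set.Ioo_subset_Ico_self) ?_
  have hsingle : μ {tt k j} = 0 :=
    measure_mono_null (by simpa using tt_notMem k j) hsupp
  calc (1:ℝ≥0∞)/2^k = μ (Set.Ico (tt k j) (tt k (j+1))) := hIco.symm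
    _ ≤ μ ({tt k j} ∪ Set.Ioo (tt k j) (tt k (j+1))) := by
        refine measure_mono fun a ⟨ha1, ha2⟩ => ?_
        rcases eq_or_lt_of_le ha1 with h | h
        · exact Or.inl (by simp [← h])
        · exact Or.inr ⟨h, ha2⟩
    _ ≤ μ {tt k j} + μ (Set.Ioo (tt k j) (tt k (j+1))) := measure_union_le _ _
    _ = μ (Set.Ioo (tt k j) (tt k (j+1))) := by rw [hsingle, zero_add]

end

section
variable (μ : Measure ℝ) [IsProbabilityMeasure μ]

lemma mu_inter_cantor (hsupp : μ cantorSetᶜ = 0) (s : Set ℝ) :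
    μ s = μ (s ∩ cantorSet) := by
  refine le_antisymm ?_ (measure_mono Set.inter_subset_left)
  calc μ s ≤ μ (s ∩ cantorSet) + μ (s \ cantorSet) := measure_le_inter_add_diff μ s cantorSet
    _ ≤ μ (s ∩ cantorSet) + μ cantorSetᶜ := by
        gcongr; exact fun x hx => hx.2
    _ = μ (s ∩ cantorSet) := by rw [hsupp, add_zero]

open Classical in
lemma dyadic_of (hsupp : μ cantorSetᶜ = 0)
    (hself : μ = (1 / 2 : ℝ≥0∞) • Measure.map (fun x : ℝ => x / 3) μ
      + (1 / 2 : ℝ≥0∞) • Measure.map (fun x : ℝ => (x + 2) / 3) μ)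
    {U : Set ℝ} (hU : IsOpen U) (hfr : frontier U ∩ cantorSet = ∅) :
    ∃ m k : ℕ, m ≤ 2 ^ k ∧ μ U = (m : ℝ≥0∞) / 2 ^ k := by
  have hUC : μ U = μ (U ∩ cantorSet) := mu_inter_cantor μ hsupp U
  set S := U ∩ cantorSet with hS
  set T := cantorSet \ U with hT
  by_cases hSne : S.Nonempty
  swap
  · refine ⟨0, 0, by norm_num, ?_⟩
    rw [hUC, Set.not_nonempty_iff_eq_empty.mp hSne]
    simp
  by_cases hTne : T.Nonempty
  swap
  · refine ⟨1, 0, by norm_num, ?_⟩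
    have hsub : cantorSet ⊆ U := by
      intro x hx
      by_contra hxU
      exact (Set.not_nonempty_iff_eq_empty.mp hTne ▸ ⟨hx, hxU⟩ : x ∈ (∅ : Set ℝ))
    have : U ∩ cantorSet = cantorSet := Set.inter_eq_self_of_subset_right hsub
    rw [hUC, hS, this, mu_cantor μ hsupp]
    simp
  -- S is compact
  have hSeq : S = closure U ∩ cantorSet := by
    refine le_antisymm (Set.inter_subset_inter subset_closure le_rfl) ?_
    rintro x ⟨hxc, hxC⟩
    rw [closure_eq_interior_union_frontier, hU.interior_eq] at hxc
    rcases hxc with h | h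
    · exact ⟨h, hxC⟩
    · have hmem : x ∈ frontier U ∩ cantorSet := ⟨h, hxC⟩
      rw [hfr] at hmem
      exact hmem.elim
  have hSclosed : IsClosed S := hSeq ▸ isClosed_closure.inter isClosed_cantorSet
  have hScomp : IsCompact S :=
    isCompact_cantorSet.of_isClosed_subset hSclosed Set.inter_subset_right
  have hTclosed : IsClosed T := isClosed_cantorSet.inter hU.isClosed_compl
  -- separation
  obtain ⟨x₀, hx₀S, hx₀min⟩ :=
    hScomp.exists_isMinOn hSne ((Metric.continuous_infDist_pt T).continuousOn)
  set δ := Metric.infDist x₀ T with hδ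
  have hδpos : 0 < δ := by
    rw [hδ, ← hTclosed.notMem_iff_infDist_pos hTne]
    exact fun h => h.2 hx₀S.1
  have hsep : ∀ x ∈ S, ∀ y ∈ T, δ ≤ dist x y := by
    intro x hx y hy
    exact le_trans (hx₀min hx) (Metric.infDist_le_dist_of_mem hy)
  obtain ⟨k, hk⟩ := exists_pow_lt_of_lt_one hδpos (by norm_num : (1/3 : ℝ) < 1)
  set A : ℕ → Set ℝ := fun j => Set.Ioo (tt k j) (tt k (j+1)) with hA
  set F : Finset ℕ := (Finset.range (2^k)).filter
    (fun j => ((cantorSet ∩ A j) ∩ U).Nonempty) with hF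
  have claim1 : ∀ j ∈ F, cantorSet ∩ A j ⊆ U := by
    intro j hj x hx
    rw [hF, Finset.mem_filter] at hj
    obtain ⟨hjr, w, hw⟩ := hj
    by_contra hxU
    have hdist := hsep w ⟨hw.2, hw.1.1⟩ x ⟨hx.1, hxU⟩
    have : |w - x| ≤ (1/3)^k :=
      tt_diam k j (Finset.mem_range.mp hjr) w x hw.1.1 hx.1 hw.1.2 hx.2
    rw [Real.dist_eq] at hdist
    linarith
  have claim2 : U ∩ cantorSet ⊆ ⋃ j ∈ F, A j := by
    rintro x ⟨hxU, hxC⟩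
    obtain ⟨j, hjlt, hjm⟩ := tt_cover k hxC
    exact Set.mem_biUnion
      (Finset.mem_filter.mpr ⟨Finset.mem_range.mpr hjlt, ⟨x, ⟨hxC, hjm⟩, hxU⟩⟩) hjm
  have hdisj : (F : Set ℕ).PairwiseDisjoint A := by
    intro i hi j hj hij
    simp only [Finset.coe_filter, Set.mem_setOf_eq, Finset.mem_range, hF] at hi hj
    have key : ∀ a b : ℕ, a < b → b < 2^k → Disjoint (A a) (A b) := by
      intro a b hab hb
      rw [Set.disjoint_left]
      rintro x ⟨_, hx2⟩ ⟨hx3, _⟩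
      have : tt k (a+1) ≤ tt k b := tt_mono k (by omega) (by omega)
      linarith
    rcases lt_or_gt_of_ne hij with h | h
    · exact key i j h hj.1
    · exact (key j i h hi.1).symm
  have hsum : μ (⋃ j ∈ F, A j) = (F.card : ℝ≥0∞) / 2^k := by
    rw [measure_biUnion_finset hdisj (fun j _ => measurableSet_Ioo)]
    have : ∀ j ∈ F, μ (A j) = 1/2^k := by
      intro j hj
      rw [hF, Finset.mem_filter, Finset.mem_range] at hj
      exact mu_piece μ hsupp hself k j hj.1
    rw [Finset.sum_congr rfl this, Finset.sum_const, nsmul_eq_mul]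
    rw [mul_one_div]
  have hupper : μ (U ∩ cantorSet) ≤ (F.card : ℝ≥0∞) / 2^k :=
    hsum ▸ measure_mono claim2
  have hlower : (F.card : ℝ≥0∞) / 2^k ≤ μ (U ∩ cantorSet) := by
    rw [← hsum, mu_inter_cantor μ hsupp (⋃ j ∈ F, A j)]
    refine measure_mono ?_
    rintro x ⟨hx1, hx2⟩
    obtain ⟨j, hj, hjm⟩ := Set.mem_iUnion₂.mp hx1
    exact ⟨claim1 j hj ⟨hx2, hjm⟩, hx2⟩
  refine ⟨F.card, k, ?_, by rw [hUC]; exact le_antisymm hupper hlower⟩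
  calc F.card ≤ (Finset.range (2^k)).card := Finset.card_filter_le _ _
    _ = 2^k := Finset.card_range _

end



/-- For the Cantor–Lebesgue measure `μ`, every dyadic rational `m / 2^k` with
`m ≤ 2^k` is realized as `μ U` for some open set `U` whose frontier misses the
Cantor set; consequently the set of such values is exactly the set of dyadic
rationals in `[0,1]`. -/
theorem stmt_6 (μ : Measure ℝ) [IsProbabilityMeasure μ]
    (hsupp : μ cantorSetᶜ = 0)
    (hself : μ = (1 / 2 : ℝ≥0∞) • Measure.map (fun x : ℝ => x / 3) μ
      + (1 / 2 : ℝ≥0∞) • Measure.map (fun x : ℝ => (x + 2) / 3) μ) :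
    (∀ k m : ℕ, m ≤ 2 ^ k →
      ∃ U : Set ℝ, IsOpen U ∧ frontier U ∩ cantorSet = ∅ ∧
        μ U = (m : ℝ≥0∞) / 2 ^ k) ∧
    {v : ℝ≥0∞ | ∃ U : Set ℝ, IsOpen U ∧ frontier U ∩ cantorSet = ∅ ∧ μ U = v}
      = {v : ℝ≥0∞ | ∃ m k : ℕ, m ≤ 2 ^ k ∧ v = (m : ℝ≥0∞) / 2 ^ k} := by
  have part1 : ∀ k m : ℕ, m ≤ 2 ^ k →
      ∃ U : Set ℝ, IsOpen U ∧ frontier U ∩ cantorSet = ∅ ∧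
        μ U = (m : ℝ≥0∞) / 2 ^ k := by
    intro k m hm
    refine ⟨Set.Iio (tt k m), isOpen_Iio, ?_, mu_tt μ hsupp hself k m hm⟩
    rw [frontier_Iio]
    rw [Set.eq_empty_iff_forall_notMem]
    rintro x ⟨hx1, hx2⟩
    rw [Set.mem_singleton_iff] at hx1
    exact tt_notMem k m (hx1 ▸ hx2)
  refine ⟨part1, ?_⟩
  ext v
  simp only [Set.mem_setOf_eq]
  constructor
  · rintro ⟨U, hU, hfr, rfl⟩
    exact dyadic_of μ hsupp hself hU hfr
  · rintro ⟨m, k, hm, rfl⟩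
    obtain ⟨U, h1, h2, h3⟩ := part1 k m hm
    exact ⟨U, h1, h2, h3⟩
end
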